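/- arXiv:2008.08059 — 2 statements merged into one kernel-verified Lean document; each statement's English description precedes it below -/
import Mathlib

section
/- Fix a finite distribution family $\mathcal{A}$ and tolerance $\tau > 0$. Suppose an algorithm makes $q < \frac{\tau^2}{\mathrm{Var}(\mathcal{A})} - 1$ correlation queries $\phi_1, \dots, \phi_q : \mathcal{X} \to [-1,1]$, and an adversarial oracle answers $0$ to each query. Then there exists $(f, \mathcal{D}) \in \mathcal{A}$ such that (a) $|\langle f, \phi_i \rangle_{\mathcal{D}}| < \tau$ for all $i \in [q]$ (so the oracle answers are valid within tolerance $\tau$), and (b) for any hypothesis $h : \mathcal{X} \to \mathbb{R}$ output by the algorithm, $|\langle f, \tilde{h} \rangle_{\mathcal{D}}| \le \tau$ where $\tilde{h}$ is the clamp of $h$ to $[-1,1]$. -/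
open Finset

/-!
Call a member `a` of the family bad for a test function `ψ : X → [-1, 1]` if `|⟨F a, ψ⟩_{D a}| ≥ τ`.
Since `famVar` bounds the average of `⟨F a, ψ⟩_{D a}²` over the family, Markov's inequality shows
that at most a `famVar / τ²` fraction of the family is bad for `ψ`. The `q` queries together with
the clamped hypothesis are `q + 1` test functions, and `(q + 1) · famVar < τ²`, so some member is
bad for none of them.
-/

/-- The "variance" of a finite family of labeled distributions. -/
noncomputable def famVar {X ι : Type} [Fintype X] [Fintype ι]
    (F D : ι → X → ℝ) : ℝ :=
  sSup {v : ℝ | ∃ φ : X → ℝ, (∀ x, |φ x| ≤ 1) ∧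
    v = (Fintype.card ι : ℝ)⁻¹ * ∑ a, (∑ x, D a x * (F a x * φ x)) ^ 2}

section Counting

variable {X ι : Type} [Fintype X]

/-- The correlation `⟨F a, ψ⟩_{D a}`. -/
def corr (F D : ι → X → ℝ) (a : ι) (ψ : X → ℝ) : ℝ :=
  ∑ x, D a x * (F a x * ψ x)

lemma abs_corr_le (F D : ι → X → ℝ) (a : ι) {ψ : X → ℝ} (hψ : ∀ x, |ψ x| ≤ 1) :
    |corr F D a ψ| ≤ ∑ x, |D a x * F a x| := by
  refine (abs_sum_le_sum_abs _ _).trans (sum_le_sum fun x _ => ?_)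
  rw [← mul_assoc, abs_mul]
  exact mul_le_of_le_one_right (abs_nonneg _) (hψ x)

variable [Fintype ι]

lemma bddAbove_famVar_set (F D : ι → X → ℝ) :
    BddAbove {v : ℝ | ∃ φ : X → ℝ, (∀ x, |φ x| ≤ 1) ∧
      v = (Fintype.card ι : ℝ)⁻¹ * ∑ a, (∑ x, D a x * (F a x * φ x)) ^ 2} := by
  refine ⟨(Fintype.card ι : ℝ)⁻¹ * ∑ a, (∑ x, |D a x * F a x|) ^ 2, ?_⟩
  rintro v ⟨φ, hφ, rfl⟩
  refine mul_le_mul_of_nonneg_left (sum_le_sum fun a _ => ?_) (by positivity)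
  exact sq_le_sq' (abs_le.mp (abs_corr_le F D a hφ)).1 (abs_le.mp (abs_corr_le F D a hφ)).2

lemma famVar_nonneg (F D : ι → X → ℝ) : 0 ≤ famVar F D := by
  refine Real.sSup_nonneg ?_
  rintro v ⟨φ, -, rfl⟩
  positivity

lemma sum_corr_sq_le (F D : ι → X → ℝ) {ψ : X → ℝ} (hψ : ∀ x, |ψ x| ≤ 1) :
    ∑ a, corr F D a ψ ^ 2 ≤ famVar F D * Fintype.card ι := by
  have hle := le_csSup (bddAbove_famVar_set F D) ⟨ψ, hψ, rfl⟩
  rcases (Fintype.card ι).eq_zero_or_pos with hc | hc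
  · simp [Fintype.card_eq_zero_iff.mp hc]
  · rwa [inv_mul_le_iff₀ (by exact_mod_cast hc), mul_comm] at hle

lemma card_filter_le_abs_corr_mul_sq_le (F D : ι → X → ℝ) {ψ : X → ℝ} (hψ : ∀ x, |ψ x| ≤ 1)
    {τ : ℝ} (hτ : 0 ≤ τ) :
    (#{a | τ ≤ |corr F D a ψ|} : ℝ) * τ ^ 2 ≤ famVar F D * Fintype.card ι := by
  calc (#{a | τ ≤ |corr F D a ψ|} : ℝ) * τ ^ 2
      ≤ ∑ a ∈ {a | τ ≤ |corr F D a ψ|}, corr F D a ψ ^ 2 := by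
        rw [← nsmul_eq_mul]
        refine card_nsmul_le_sum _ _ _ fun a ha => ?_
        simpa only [sq_abs] using pow_le_pow_left₀ hτ (mem_filter.mp ha).2 2
    _ ≤ ∑ a, corr F D a ψ ^ 2 :=
        sum_le_sum_of_subset_of_nonneg (filter_subset _ _) fun a _ _ => sq_nonneg _
    _ ≤ famVar F D * Fintype.card ι := sum_corr_sq_le F D hψ

lemma exists_forall_abs_corr_lt [Nonempty ι] {κ : Type} [Fintype κ] (F D : ι → X → ℝ)
    (ψ : κ → X → ℝ) (hψ : ∀ k x, |ψ k x| ≤ 1) {τ : ℝ} (hτ : 0 ≤ τ)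
    (hκ : Fintype.card κ * famVar F D < τ ^ 2) :
    ∃ a, ∀ k, |corr F D a (ψ k)| < τ := by
  classical
  by_contra! hbad
  have hcover : (univ : Finset ι) ⊆ univ.biUnion fun k => {a | τ ≤ |corr F D a (ψ k)|} := by
    intro a _
    obtain ⟨k, hk⟩ := hbad a
    exact mem_biUnion.mpr ⟨k, mem_univ _, mem_filter.mpr ⟨mem_univ _, hk⟩⟩
  have hcard : (Fintype.card ι : ℝ) ≤ ∑ k, (#{a | τ ≤ |corr F D a (ψ k)|} : ℝ) := by
    exact_mod_cast (card_le_card hcover).trans card_biUnion_le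
  have hn : (0 : ℝ) < Fintype.card ι := by exact_mod_cast Fintype.card_pos
  have : (Fintype.card ι : ℝ) * τ ^ 2 ≤ Fintype.card κ * famVar F D * Fintype.card ι :=
    calc (Fintype.card ι : ℝ) * τ ^ 2
        ≤ ∑ k, (#{a | τ ≤ |corr F D a (ψ k)|} : ℝ) * τ ^ 2 := by
          rw [← sum_mul]; gcongr
      _ ≤ ∑ _k : κ, famVar F D * Fintype.card ι :=
          sum_le_sum fun k _ => card_filter_le_abs_corr_mul_sq_le F D (hψ k) hτ
      _ = Fintype.card κ * famVar F D * Fintype.card ι := by simp [mul_assoc]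
  nlinarith

end Counting

lemma abs_clamp_le_one (t : ℝ) : |min (max t (-1)) 1| ≤ 1 :=
  abs_le.mpr ⟨le_min (le_max_right _ _) (by norm_num), min_le_right _ _⟩

theorem correlation_query_hardness_general {X ι : Type} [Fintype X] [Fintype ι] [Nonempty ι]
    (F D : ι → X → ℝ)
    (τ : ℝ) (hτ : 0 < τ) (q : ℕ)
    (hq : (q : ℝ) < τ ^ 2 / famVar F D - 1)
    (φ : Fin q → X → ℝ) (hφ : ∀ i x, |φ i x| ≤ 1)
    (h : X → ℝ) :
    ∃ a : ι, (∀ i, |∑ x, D a x * (F a x * φ i x)| < τ) ∧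
      |∑ x, D a x * (F a x * min (max (h x) (-1)) 1)| ≤ τ := by
  have hV : 0 < famVar F D := by
    refine (famVar_nonneg F D).lt_of_ne fun hV0 => ?_
    rw [← hV0, div_zero] at hq
    linarith [q.cast_nonneg (α := ℝ)]
  have hqV : ((q : ℝ) + 1) * famVar F D < τ ^ 2 := by
    rwa [lt_sub_iff_add_lt, lt_div_iff₀ hV] at hq
  let tests : Option (Fin q) → X → ℝ := fun k x => k.elim (min (max (h x) (-1)) 1) (φ · x)
  have htests : ∀ k x, |tests k x| ≤ 1 := by
    rintro (_ | i) x
    exacts [abs_clamp_le_one (h x), hφ i x]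
  obtain ⟨a, ha⟩ := exists_forall_abs_corr_lt F D tests htests hτ.le (by simpa using hqV)
  exact ⟨a, fun i => ha (some i), (ha none).le⟩

/-- if an algorithm makes `q < τ²/Var(A) - 1` correlation queries
`φ₁,…,φ_q : X → [-1,1]` and the adversarial oracle answers `0` to each, then some
`(f,D) ∈ A` is consistent with all answers (`|⟨f,φᵢ⟩_D| < τ`) and, for any output
hypothesis `h`, its clamp `h̃` satisfies `|⟨f,h̃⟩_D| ≤ τ`. -/
theorem correlation_query_hardness {X ι : Type} [Fintype X] [Fintype ι] [Nonempty ι]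
    (F D : ι → X → ℝ)
    (hD0 : ∀ a x, 0 ≤ D a x) (hD1 : ∀ a, ∑ x, D a x = 1)
    (hF : ∀ a x, F a x = 1 ∨ F a x = -1)
    (τ : ℝ) (hτ : 0 < τ) (q : ℕ)
    (hq : (q : ℝ) < τ ^ 2 / famVar F D - 1)
    (φ : Fin q → X → ℝ) (hφ : ∀ i x, |φ i x| ≤ 1)
    (h : X → ℝ) :
    ∃ a : ι, (∀ i, |∑ x, D a x * (F a x * φ i x)| < τ) ∧
      |∑ x, D a x * (F a x * min (max (h x) (-1)) 1)| ≤ τ :=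
  correlation_query_hardness_general F D τ hτ q hq φ hφ h
end

section
/- Fix a finite distribution family $\mathcal{A}$ with variance $\mathrm{Var}(\mathcal{A})$, the hinge loss, and a parametric hypothesis class $\{h_w : w \in \mathbb{R}^N\}$. Fix $w \in \mathbb{R}^N$ such that $|h_w(x)| \le 1$ and $\|\nabla_w h_w(x)\|_2 \le B$ for all $x \in \mathcal{X}$, and assume $w \mapsto h_w(x)$ is differentiable. Then $\mathbb{E}_{(f,\mathcal{D}) \sim \mathcal{A}} \|\nabla_w L_{f(\mathcal{D})}(h_w)\|_2^2 \le B^2 N \, \mathrm{Var}(\mathcal{A})$, where $L_{f(\mathcal{D})}(h_w) = \mathbb{E}_{x \sim \mathcal{D}}[\max\{1 - h_w(x)f(x), 0\}]$ and the expectation over $\mathcal{A}$ is uniform. -/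
open Finset

lemma famVar_mem_le {X ι : Type} [Fintype X] [Fintype ι]
    (F D : ι → X → ℝ)
    (hD0 : ∀ a x, 0 ≤ D a x) (hD1 : ∀ a, ∑ x, D a x = 1)
    (hF : ∀ a x, F a x = 1 ∨ F a x = -1)
    (φ : X → ℝ) (hφ : ∀ x, |φ x| ≤ 1) :
    (Fintype.card ι : ℝ)⁻¹ * ∑ a, (∑ x, D a x * (F a x * φ x)) ^ 2 ≤ famVar F D := by
  apply le_csSup
  · refine ⟨1, ?_⟩
    rintro v ⟨ψ, hψ, rfl⟩
    have key : ∀ a : ι, (∑ x, D a x * (F a x * ψ x)) ^ 2 ≤ 1 := by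
      intro a
      have h1 : |∑ x, D a x * (F a x * ψ x)| ≤ 1 := by
        calc |∑ x, D a x * (F a x * ψ x)| ≤ ∑ x, |D a x * (F a x * ψ x)| :=
              Finset.abs_sum_le_sum_abs _ _
          _ ≤ ∑ x, D a x := by
              apply Finset.sum_le_sum
              intro x _
              rw [abs_mul, abs_mul, abs_of_nonneg (hD0 a x)]
              have hFa : |F a x| = 1 := by rcases hF a x with h | h <;> simp [h]
              rw [hFa, one_mul]
              nlinarith [hψ x, hD0 a x, abs_nonneg (ψ x)]
          _ = 1 := hD1 a
      calc (∑ x, D a x * (F a x * ψ x)) ^ 2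
          = |∑ x, D a x * (F a x * ψ x)| ^ 2 := (sq_abs _).symm
        _ ≤ 1 := by nlinarith [abs_nonneg (∑ x, D a x * (F a x * ψ x))]
    rcases Nat.eq_zero_or_pos (Fintype.card ι) with hc | hc
    · have hz : ((Fintype.card ι : ℝ))⁻¹ = 0 := by rw [hc]; simp
      rw [hz, zero_mul]; norm_num
    · have hcard : (0:ℝ) < (Fintype.card ι : ℝ) := by exact_mod_cast hc
      have : ∑ a, (∑ x, D a x * (F a x * ψ x)) ^ 2 ≤ (Fintype.card ι : ℝ) := by
        calc ∑ a, (∑ x, D a x * (F a x * ψ x)) ^ 2 ≤ ∑ _a : ι, (1:ℝ) :=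
              Finset.sum_le_sum (fun a _ => key a)
          _ = (Fintype.card ι : ℝ) := by simp
      calc (Fintype.card ι : ℝ)⁻¹ * ∑ a, (∑ x, D a x * (F a x * ψ x)) ^ 2
          ≤ (Fintype.card ι : ℝ)⁻¹ * (Fintype.card ι : ℝ) := by
            apply mul_le_mul_of_nonneg_left this (by positivity)
        _ = 1 := inv_mul_cancel₀ hcard.ne'
  · exact ⟨φ, hφ, rfl⟩

theorem gradient_norm_bound {X ι : Type} [Fintype X] [Fintype ι] {N : ℕ}
    (F D : ι → X → ℝ)
    (hD0 : ∀ a x, 0 ≤ D a x) (hD1 : ∀ a, ∑ x, D a x = 1)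
    (hF : ∀ a x, F a x = 1 ∨ F a x = -1)
    (h : (Fin N → ℝ) → X → ℝ) (w : Fin N → ℝ)
    (g : X → Fin N → ℝ)
    (hg : ∀ x i, HasDerivAt (fun s => h (Function.update w i s) x) (g x i) (w i))
    (hbound : ∀ x, |h w x| ≤ 1)
    (B : ℝ) (hB : ∀ x, Real.sqrt (∑ i, g x i ^ 2) ≤ B) :
    (Fintype.card ι : ℝ)⁻¹ * ∑ a, (∑ i, (∑ x, D a x * (F a x * g x i)) ^ 2)
      ≤ B ^ 2 * N * famVar F D := by
  have hVar0 : 0 ≤ famVar F D := by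
    have := famVar_mem_le F D hD0 hD1 hF (fun _ => 0) (by intro x; simp)
    simpa using this
  -- swap sums
  have hswap : (Fintype.card ι : ℝ)⁻¹ * ∑ a, (∑ i, (∑ x, D a x * (F a x * g x i)) ^ 2)
      = ∑ i, (Fintype.card ι : ℝ)⁻¹ * ∑ a, (∑ x, D a x * (F a x * g x i)) ^ 2 := by
    rw [Finset.sum_comm, Finset.mul_sum]
  rw [hswap]
  by_cases hX : Nonempty X
  · -- then B ≥ 0
    obtain ⟨x0⟩ := hX
    have hB0 : 0 ≤ B := le_trans (Real.sqrt_nonneg _) (hB x0)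
    rcases eq_or_lt_of_le hB0 with hBz | hBpos
    · -- B = 0 forces g = 0
      have hg0 : ∀ x i, g x i = 0 := by
        intro x i
        have h1 : ∑ j, g x j ^ 2 ≤ 0 := by
          by_contra hcon
          push_neg at hcon
          have := Real.sqrt_pos.mpr hcon
          have := hB x
          linarith [hBz]
        have h2 : (0:ℝ) ≤ ∑ j, g x j ^ 2 := Finset.sum_nonneg (fun j _ => sq_nonneg _)
        have hsum0 : ∑ j, g x j ^ 2 = 0 := le_antisymm h1 h2
        have := (Finset.sum_eq_zero_iff_of_nonneg
          (fun j _ => sq_nonneg (g x j))).mp hsum0 i (Finset.mem_univ i)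
        exact pow_eq_zero_iff (n := 2) (by norm_num) |>.mp this
      have : ∀ i : Fin N, (Fintype.card ι : ℝ)⁻¹ *
          ∑ a, (∑ x, D a x * (F a x * g x i)) ^ 2 = 0 := by
        intro i; simp [hg0]
      rw [Finset.sum_congr rfl (fun i _ => this i)]
      simp only [Finset.sum_const_zero]
      positivity
    · -- B > 0
      have key : ∀ i : Fin N, (Fintype.card ι : ℝ)⁻¹ *
          ∑ a, (∑ x, D a x * (F a x * g x i)) ^ 2 ≤ B ^ 2 * famVar F D := by
        intro i
        have habs : ∀ x, |g x i / B| ≤ 1 := by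
          intro x
          rw [abs_div, abs_of_pos hBpos, div_le_one hBpos]
          have h1 : g x i ^ 2 ≤ ∑ j, g x j ^ 2 :=
            Finset.single_le_sum (f := fun j => g x j ^ 2)
              (fun j _ => sq_nonneg _) (Finset.mem_univ i)
          have h2 : |g x i| = Real.sqrt (g x i ^ 2) := (Real.sqrt_sq_eq_abs _).symm
          rw [h2]
          exact le_trans (Real.sqrt_le_sqrt h1) (hB x)
        have hmem := famVar_mem_le F D hD0 hD1 hF (fun x => g x i / B) habs
        have heq : ∀ a, (∑ x, D a x * (F a x * (g x i / B))) ^ 2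
            = (∑ x, D a x * (F a x * g x i)) ^ 2 / B ^ 2 := by
          intro a
          have : ∑ x, D a x * (F a x * (g x i / B))
              = (∑ x, D a x * (F a x * g x i)) / B := by
            rw [Finset.sum_div]
            apply Finset.sum_congr rfl
            intro x _
            ring
          rw [this, div_pow]
        have hB2 : (0:ℝ) < B ^ 2 := by positivity
        have := mul_le_mul_of_nonneg_left hmem (le_of_lt hB2)
        calc (Fintype.card ι : ℝ)⁻¹ * ∑ a, (∑ x, D a x * (F a x * g x i)) ^ 2
            = B ^ 2 * ((Fintype.card ι : ℝ)⁻¹ *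
                ∑ a, (∑ x, D a x * (F a x * (g x i / B))) ^ 2) := by
              rw [Finset.sum_congr rfl (fun a _ => heq a), ← Finset.sum_div,
                mul_left_comm]
              congr 1
              field_simp
          _ ≤ B ^ 2 * famVar F D := this
      calc ∑ i, (Fintype.card ι : ℝ)⁻¹ * ∑ a, (∑ x, D a x * (F a x * g x i)) ^ 2
          ≤ ∑ _i : Fin N, B ^ 2 * famVar F D := Finset.sum_le_sum (fun i _ => key i)
        _ = B ^ 2 * N * famVar F D := by
            rw [Finset.sum_const, Finset.card_univ, Fintype.card_fin]
            ring
  · -- X empty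
    have hEmpty : (Finset.univ : Finset X) = ∅ := by
      simp [Finset.univ_eq_empty_iff, not_nonempty_iff.mp hX]
    simp only [hEmpty, Finset.sum_empty]
    simp only [ne_eq, OfNat.ofNat_ne_zero, not_false_eq_true, zero_pow,
      Finset.sum_const_zero, mul_zero]
    positivity
end
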